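/- Let q be a primitive l-th root of unity, l > 2, q' = -q of order l'. The nilpotent module M_d(λ) (defined via k = λQ, f = P, e = (1/η)P'(q^{1/2}λQ - q^{-1/2}λ^{-1}Q^{-1} - σU) on the d-dimensional space V_d, with σ = q^{1/2}λ - q^{-1/2}λ^{-1} and (q'^d-1)(λ^2 - q'^{d-1}) = 0) is irreducible if and only if ∏_{n=1}^{d-1} (q'^n - 1)(q^{1/2-d}λ + q^{d-1/2}λ^{-1} q'^{-n}) ≠ 0; equivalently, if and only if either d < l', or d = l' and q'λ^2 is not a nontrivial power of q'. -/

import Mathlib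

open Matrix

/-- `Q|m⟩ = q^{-m}|m⟩`. -/
noncomputable def Qmat (q : ℂ) (d : ℕ) : Matrix (Fin d) (Fin d) ℂ :=
  Matrix.diagonal fun m => (q⁻¹) ^ (m : ℕ)

/-- `Q⁻¹|m⟩ = q^{m}|m⟩`. -/
noncomputable def QmatInv (q : ℂ) (d : ℕ) : Matrix (Fin d) (Fin d) ℂ :=
  Matrix.diagonal fun m => q ^ (m : ℕ)

/-- `U|m⟩ = (-1)^m|m⟩`. -/
noncomputable def Umat (d : ℕ) : Matrix (Fin d) (Fin d) ℂ :=
  Matrix.diagonal fun m => (-1 : ℂ) ^ (m : ℕ)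

/-- Truncated shift `P|m⟩ = |m+1⟩`, with `P|d-1⟩ = 0`. -/
def Pnil (d : ℕ) : Matrix (Fin d) (Fin d) ℂ :=
  Matrix.of fun i j => if (i : ℕ) = (j : ℕ) + 1 then 1 else 0

/-- Truncated backward shift `P'|m⟩ = |m-1⟩`, with `P'|0⟩ = 0`. -/
def Pnil' (d : ℕ) : Matrix (Fin d) (Fin d) ℂ :=
  Matrix.of fun i j => if (j : ℕ) = (i : ℕ) + 1 then 1 else 0

/-! In the basis `|m⟩`, `f` sends `|m⟩` to `|m + 1⟩`, `k` is diagonal and `e` sends `|m⟩` to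
`c m • |m - 1⟩`. Such a module is irreducible iff no `c n` with `0 < n < d` vanishes: a zero `c n`
makes `span {|n⟩, …, |d - 1⟩}` invariant, while otherwise powers of `f` push any nonzero vector onto
a multiple of `|d - 1⟩`, from which `e` regenerates the whole basis.

Clearing denominators, `c n = 0` iff `q'ⁿ = 1` or `q'λ² = q'ⁿ`, while the `n`-th factor of the
product vanishes iff `q'ⁿ = 1` or `q'λ² q'ⁿ = q'^(2d)`. The constraint on `λ` says `q'ᵈ = 1` or
`q'λ² = q'ᵈ`; in the first case `n ↦ d - n` turns one list of conditions into the other, in the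
second they agree termwise. Finally, `q'ⁿ ≠ 1` for all `0 < n < d` forces `d ≤ l'`, and for `d < l'`
the constraint gives `q'λ² = q'ᵈ`, which is no `q'ⁿ` with `n < d`. -/

section WeightedShift

variable {d : ℕ}

lemma Pnil_mulVec_apply (v : Fin d → ℂ) (i : Fin d) :
    (Pnil d *ᵥ v) i = if h : 0 < (i : ℕ) then v ⟨i - 1, by omega⟩ else 0 := by
  simp only [mulVec, dotProduct, Pnil, of_apply, ite_mul, one_mul, zero_mul]
  split_ifs with h
  · rw [Fintype.sum_eq_single ⟨i - 1, by omega⟩ fun j hj =>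
      if_neg fun h' => hj (by ext; simp; omega)]
    exact if_pos (by simp; omega)
  · exact Finset.sum_eq_zero fun j _ => if_neg (by omega)

lemma Pnil'_mulVec_apply (v : Fin d → ℂ) (i : Fin d) :
    (Pnil' d *ᵥ v) i = if h : (i : ℕ) + 1 < d then v ⟨i + 1, h⟩ else 0 := by
  simp only [mulVec, dotProduct, Pnil', of_apply, ite_mul, one_mul, zero_mul]
  split_ifs with h
  · rw [Fintype.sum_eq_single ⟨i + 1, h⟩ fun j hj => if_neg fun h' => hj (Fin.ext h')]
    exact if_pos rfl
  · exact Finset.sum_eq_zero fun j _ => if_neg (by omega)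

lemma Pnil_pow_mulVec_apply (k : ℕ) (v : Fin d → ℂ) (i : Fin d) :
    (Pnil d ^ k *ᵥ v) i = if h : k ≤ (i : ℕ) then v ⟨i - k, by omega⟩ else 0 := by
  induction k generalizing i with
  | zero => simp
  | succ k ih =>
    rw [pow_succ', ← mulVec_mulVec, Pnil_mulVec_apply]
    by_cases hk : k + 1 ≤ (i : ℕ)
    · simp only [dif_pos hk, dif_pos (show 0 < (i : ℕ) by omega), ih,
        dif_pos (show k ≤ (i : ℕ) - 1 by omega)]
      congr 2
      omega
    · rw [dif_neg hk]
      split_ifs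
      · rw [ih, dif_neg (by simp; omega)]
      · rfl

lemma Pnil'_mul_diagonal_mulVec_single (c : Fin (d + 1) → ℂ) (i : Fin d) :
    (Pnil' (d + 1) * diagonal c) *ᵥ Pi.single i.succ 1 = c i.succ • Pi.single i.castSucc 1 := by
  ext j
  rw [← mulVec_mulVec, Pnil'_mulVec_apply]
  by_cases hj : j = i.castSucc
  · subst hj
    simp [mulVec_diagonal, Fin.succ]
  · have hne : ∀ h : (j : ℕ) + 1 < d + 1, (⟨j + 1, h⟩ : Fin (d + 1)) ≠ i.succ := fun _ h' =>
      hj (by ext; simpa [Fin.ext_iff] using h')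
    simp [mulVec_diagonal, hj, hne]

lemma single_last_mem_of_Pnil_invariant {W : Submodule ℂ (Fin (d + 1) → ℂ)}
    (hF : ∀ v ∈ W, Pnil (d + 1) *ᵥ v ∈ W) {v : Fin (d + 1) → ℂ} (hv : v ∈ W) (hv0 : v ≠ 0) :
    Pi.single (Fin.last d) 1 ∈ W := by
  obtain ⟨m, hm, hmin⟩ := wellFounded_lt.has_min {i | v i ≠ 0} (Function.ne_iff.1 hv0)
  have hpow : ∀ k, Pnil (d + 1) ^ k *ᵥ v ∈ W := by
    intro k
    induction k with
    | zero => simpa using hv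
    | succ k ih => rw [pow_succ', ← mulVec_mulVec]; exact hF _ ih
  -- `m` is the lowest nonzero coordinate, so shifting it to the top kills all the others
  have hshift : Pnil (d + 1) ^ (d - m) *ᵥ v = v m • Pi.single (Fin.last d) 1 := by
    ext i
    rw [Pnil_pow_mulVec_apply, Pi.smul_apply, Pi.single_apply]
    by_cases hi : i = Fin.last d
    · subst hi
      rw [dif_pos (by simp), if_pos rfl, smul_eq_mul, mul_one]
      congr 2
      simp only [Fin.val_last]
      omega
    · rw [if_neg hi, smul_zero]
      split_ifs with h
      · by_contra h'
        have hi' : (i : ℕ) < d := by simpa using Fin.val_lt_last hi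
        exact hmin _ h' (by rw [Fin.lt_def]; simp only; omega)
      · rfl
  rw [← W.smul_mem_iff hm, ← hshift]
  exact hpow _

lemma exists_weightedShift_invariant_of_eq_zero (c : ℕ → ℂ) (g : Fin d → ℂ) {n : ℕ}
    (hn : 0 < n) (hnd : n < d) (hc : c n = 0) :
    ∃ W : Submodule ℂ (Fin d → ℂ),
      (∀ v ∈ W, (Pnil' d * diagonal fun i : Fin d => c i) *ᵥ v ∈ W) ∧ (∀ v ∈ W, Pnil d *ᵥ v ∈ W) ∧
      (∀ v ∈ W, diagonal g *ᵥ v ∈ W) ∧ W ≠ ⊥ ∧ W ≠ ⊤ := by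
  refine ⟨Submodule.pi {i | (i : ℕ) < n} fun _ => ⊥, ?_, ?_, ?_, ?_, ?_⟩
  all_goals simp only [ne_eq, Submodule.eq_bot_iff, Submodule.eq_top_iff', Submodule.mem_pi,
    Set.mem_ofPred_eq, Submodule.mem_bot]
  · intro v hv i hi
    rw [← mulVec_mulVec, Pnil'_mulVec_apply]
    split_ifs with h
    · rw [mulVec_diagonal]
      rcases (show (i : ℕ) + 1 < n ∨ (i : ℕ) + 1 = n by omega) with hlt | heq
      · rw [hv _ hlt, mul_zero]
      · simp only [heq, hc, zero_mul]
    · rfl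
  · intro v hv i hi
    rw [Pnil_mulVec_apply]
    split_ifs
    · exact hv _ (by simp only; omega)
    · rfl
  · intro v hv i hi
    rw [mulVec_diagonal, hv i hi, mul_zero]
  · intro h
    have := congr_fun (h (Pi.single ⟨n, hnd⟩ 1) fun i hi =>
      Pi.single_eq_of_ne (fun h' => by simp [h'] at hi) _) ⟨n, hnd⟩
    simp at this
  · intro h
    simpa using h (Pi.single ⟨0, by omega⟩ 1) ⟨0, by omega⟩ hn

lemma Submodule.eq_top_of_weightedShift_invariant {c : ℕ → ℂ}
    (hc : ∀ n, 0 < n → n < d → c n ≠ 0) {W : Submodule ℂ (Fin d → ℂ)}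
    (hE : ∀ v ∈ W, (Pnil' d * diagonal fun i : Fin d => c i) *ᵥ v ∈ W)
    (hF : ∀ v ∈ W, Pnil d *ᵥ v ∈ W) (hW : W ≠ ⊥) : W = ⊤ := by
  cases d with
  | zero => exact absurd Submodule.eq_bot_of_subsingleton hW
  | succ d =>
    obtain ⟨v, hv, hv0⟩ := W.ne_bot_iff.1 hW
    have hsingle : ∀ i, Pi.single i 1 ∈ W :=
      Fin.reverseInduction (single_last_mem_of_Pnil_invariant hF hv hv0) fun i hi => by
        have := hE _ hi
        rwa [Pnil'_mul_diagonal_mulVec_single,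
          W.smul_mem_iff (hc i.succ (Nat.succ_pos _) i.succ.isLt)] at this
    rw [eq_top_iff, ← (Pi.basisFun ℂ _).span_eq, Submodule.span_le]
    rintro _ ⟨i, rfl⟩
    simpa using hsingle i

theorem weightedShift_irreducible_iff (c : ℕ → ℂ) (g : Fin d → ℂ) :
    (∀ W : Submodule ℂ (Fin d → ℂ),
        (∀ v ∈ W, (Pnil' d * diagonal fun i : Fin d => c i) *ᵥ v ∈ W) → (∀ v ∈ W, Pnil d *ᵥ v ∈ W) →
        (∀ v ∈ W, diagonal g *ᵥ v ∈ W) → W = ⊥ ∨ W = ⊤) ↔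
      ∀ n, 0 < n → n < d → c n ≠ 0 := by
  refine ⟨fun h n hn hnd hc => ?_, fun hc W hE hF _ =>
    or_iff_not_imp_left.2 (Submodule.eq_top_of_weightedShift_invariant hc hE hF)⟩
  obtain ⟨W, hE, hF, hK, hbot, htop⟩ := exists_weightedShift_invariant_of_eq_zero c g hn hnd hc
  exact (h W hE hF hK).elim hbot htop

end WeightedShift

lemma pow_eq_one_or_mul_sq_eq_pow {R : Type*} [Ring R] [NoZeroDivisors R] {x y : R} {d : ℕ}
    (h : (x ^ d - 1) * (y ^ 2 - x ^ (d - 1)) = 0) : x ^ d = 1 ∨ x * y ^ 2 = x ^ d := by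
  rcases mul_eq_zero.1 h with h | h
  · exact Or.inl (sub_eq_zero.1 h)
  · cases d with
    | zero => exact Or.inl (pow_zero x)
    | succ d => exact Or.inr (by rw [sub_eq_zero.1 h, pow_succ']; rfl)

lemma forall_pow_ne_one_and_ne_pow_iff {M : Type*} [Monoid M] {x μ : M} {d : ℕ}
    (hx : IsOfFinOrder x) (h : x ^ d = 1 ∨ μ = x ^ d) :
    (∀ n, 0 < n → n < d → x ^ n ≠ 1 ∧ μ ≠ x ^ n) ↔
      d < orderOf x ∨ d = orderOf x ∧ ¬∃ j, 0 < j ∧ j < orderOf x ∧ μ = x ^ j := by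
  rcases lt_trichotomy d (orderOf x) with hlt | rfl | hgt
  · simp only [hlt, true_or, iff_true]
    intro n hn hnd
    refine ⟨pow_ne_one_of_lt_orderOf hn.ne' (hnd.trans hlt), fun hμn => hnd.ne ?_⟩
    have hμd := h.resolve_left (pow_ne_one_of_lt_orderOf (by omega) hlt)
    exact pow_injOn_Iio_orderOf (hnd.trans hlt) hlt (hμn.symm.trans hμd)
  · simp only [lt_irrefl, true_and, false_or, not_exists, not_and]
    exact ⟨fun H j hj hjd => (H j hj hjd).2,
      fun H n hn hnd => ⟨pow_ne_one_of_lt_orderOf hn.ne' hnd, H n hn hnd⟩⟩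
  · refine iff_of_false (fun H => (H _ hx.orderOf_pos hgt).1 (pow_orderOf_eq_one x)) ?_
    omega

lemma forall_pos_lt_iff_forall_sub {P : ℕ → Prop} {d : ℕ} :
    (∀ n, 0 < n → n < d → P (d - n)) ↔ ∀ n, 0 < n → n < d → P n :=
  ⟨fun H n hn hnd => by simpa [Nat.sub_sub_self hnd.le] using H (d - n) (by omega) (by omega),
    fun H n hn hnd => H (d - n) (by omega) (by omega)⟩

lemma forall_ne_pow_iff_forall_mul_pow_ne {G : Type*} [CommGroupWithZero G] {x μ : G} {d : ℕ}
    (hx : x ≠ 0) (h : x ^ d = 1 ∨ μ = x ^ d) :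
    (∀ n, 0 < n → n < d → x ^ n ≠ 1 ∧ μ ≠ x ^ n) ↔
      ∀ n, 0 < n → n < d → x ^ n ≠ 1 ∧ μ * x ^ n ≠ x ^ (2 * d) := by
  rcases h with h | rfl
  · -- `n ↦ d - n` matches the two conditions, since `x ^ (d - n) = (x ^ n)⁻¹`
    rw [← forall_pos_lt_iff_forall_sub]
    refine forall₃_congr fun n _ hnd => ?_
    have hinv : x ^ (d - n) = (x ^ n)⁻¹ :=
      eq_inv_of_mul_eq_one_left (by rwa [pow_sub_mul_pow x hnd.le])
    rw [pow_mul', h, one_pow, hinv, ne_eq, ne_eq, ne_eq, ne_eq, inv_eq_one,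
      mul_eq_one_iff_eq_inv₀ (pow_ne_zero n hx)]
  · refine forall₃_congr fun n _ _ => and_congr_right fun _ => not_congr ?_
    rw [two_mul, pow_add, mul_right_inj' (pow_ne_zero d hx), eq_comm]

section Coefficients

variable {K : Type*} [Field K]

lemma sq_add_inv_mul_sub_inv_ne_zero {q sq : K} (hsq : sq ^ 2 = q) (hq0 : q ≠ 0) (hq : q ^ 2 ≠ 1) :
    (sq + sq⁻¹) * (q - q⁻¹) ≠ 0 := by
  have hsq0 : sq ≠ 0 := by rintro rfl; exact hq0 (by simpa using hsq.symm)
  refine mul_ne_zero (fun h => hq ?_) (fun h => hq ?_)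
  · field_simp at h
    linear_combination (q - 1) * h - (q - 1) * hsq
  · field_simp at h
    linear_combination h

/-- The coefficient of `e|n⟩ = eCoeff q sq λ σ η n • |n - 1⟩` in `M_d(λ)`. -/
def eCoeff (q sq lam σ η : K) (n : ℕ) : K :=
  η⁻¹ * (sq * lam * q⁻¹ ^ n - sq⁻¹ * lam⁻¹ * q ^ n - σ * (-1) ^ n)

lemma eCoeff_eq_zero_iff {q sq lam η : K} (hsq : sq ^ 2 = q) (hsq0 : sq ≠ 0) (hlam : lam ≠ 0)
    (hη : η ≠ 0) (n : ℕ) :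
    eCoeff q sq lam (sq * lam - sq⁻¹ * lam⁻¹) η n = 0 ↔
      (-q) ^ n = 1 ∨ (-q) * lam ^ 2 = (-q) ^ n := by
  have hq0 : q ≠ 0 := hsq ▸ pow_ne_zero 2 hsq0
  have key : sq * lam * q ^ n *
      (sq * lam * q⁻¹ ^ n - sq⁻¹ * lam⁻¹ * q ^ n - (sq * lam - sq⁻¹ * lam⁻¹) * (-1) ^ n) =
        -(((-q) ^ n - 1) * (q * lam ^ 2 + (-q) ^ n)) := by
    subst hsq
    rcases n.even_or_odd with hn | hn <;>
    · rw [hn.neg_one_pow, hn.neg_pow, inv_pow]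
      field_simp
      ring
  rw [eCoeff, mul_eq_zero, or_iff_right (inv_ne_zero hη),
    ← mul_right_inj' (by positivity : sq * lam * q ^ n ≠ 0), mul_zero, key, neg_eq_zero,
    mul_eq_zero, sub_eq_zero]
  exact or_congr_right ⟨fun h => by linear_combination -h, fun h => by linear_combination -h⟩

lemma productFactor_eq_zero_iff {q sq lam : K} (hsq : sq ^ 2 = q) (hsq0 : sq ≠ 0)
    (hlam : lam ≠ 0) (d n : ℕ) :
    ((-q) ^ n - 1) * (sq * (q ^ d)⁻¹ * lam + q ^ d * sq⁻¹ * lam⁻¹ * ((-q) ^ n)⁻¹) = 0 ↔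
      (-q) ^ n = 1 ∨ (-q) * lam ^ 2 * (-q) ^ n = (-q) ^ (2 * d) := by
  have hq0 : q ≠ 0 := hsq ▸ pow_ne_zero 2 hsq0
  have key : sq * lam * q ^ d * (-q) ^ n *
      (sq * (q ^ d)⁻¹ * lam + q ^ d * sq⁻¹ * lam⁻¹ * ((-q) ^ n)⁻¹) =
        q * lam ^ 2 * (-q) ^ n + q ^ d * q ^ d := by
    subst hsq
    field_simp
  rw [mul_eq_zero, sub_eq_zero]
  refine or_congr_right ?_
  have hne : sq * lam * q ^ d * (-q) ^ n ≠ 0 :=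
    mul_ne_zero (by positivity) (pow_ne_zero n (neg_ne_zero.2 hq0))
  rw [← mul_right_inj' hne, mul_zero, key, pow_mul, neg_sq]
  exact ⟨fun h => by linear_combination -h, fun h => by linear_combination -h⟩

end Coefficients

lemma smul_Qmat_eq_diagonal (q lam : ℂ) (d : ℕ) :
    lam • Qmat q d = diagonal fun i : Fin d => lam * q⁻¹ ^ (i : ℕ) := by
  rw [Qmat, ← diagonal_smul]
  rfl

lemma smul_Pnil'_mul_eq_mul_diagonal (q sq lam σ η : ℂ) (d : ℕ) :
    η⁻¹ • (Pnil' d * ((sq * lam) • Qmat q d - (sq⁻¹ * lam⁻¹) • QmatInv q d - σ • Umat d)) =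
      Pnil' d * diagonal fun i : Fin d => eCoeff q sq lam σ η i := by
  rw [Qmat, QmatInv, Umat, ← diagonal_smul, ← diagonal_smul, ← diagonal_smul, diagonal_sub,
    diagonal_sub, ← Matrix.mul_smul, ← diagonal_smul]
  rfl

theorem nilpotent_module_irreducible_iff_general
    (q sq : ℂ) (l : ℕ) (hl : 2 < l) (hprim : IsPrimitiveRoot q l) (hsq : sq ^ 2 = q)
    (l' : ℕ) (hl' : l' = orderOf (-q))
    (d : ℕ)
    (lam sigma : ℂ) (hlam : lam ≠ 0)
    (hsigma : sigma = sq * lam - sq⁻¹ * lam⁻¹)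
    (hquant : ((-q) ^ d - 1) * (lam ^ 2 - (-q) ^ (d - 1)) = 0)
    (η : ℂ) (hη : η = (sq + sq⁻¹) * (q - q⁻¹))
    (kM fM eM : Matrix (Fin d) (Fin d) ℂ)
    (hk : kM = lam • Qmat q d)
    (hf : fM = Pnil d)
    (he : eM = η⁻¹ •
      (Pnil' d * ((sq * lam) • Qmat q d - (sq⁻¹ * lam⁻¹) • QmatInv q d
        - sigma • Umat d))) :
    ((∀ W : Submodule ℂ (Fin d → ℂ),
        (∀ v ∈ W, eM.mulVec v ∈ W) → (∀ v ∈ W, fM.mulVec v ∈ W) →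
        (∀ v ∈ W, kM.mulVec v ∈ W) → W = ⊥ ∨ W = ⊤) ↔
      (∏ n ∈ Finset.Icc 1 (d - 1),
          (((-q) ^ n - 1) *
            (sq * (q ^ d)⁻¹ * lam + q ^ d * sq⁻¹ * lam⁻¹ * ((-q) ^ n)⁻¹)) ≠ 0)) ∧
    ((∀ W : Submodule ℂ (Fin d → ℂ),
        (∀ v ∈ W, eM.mulVec v ∈ W) → (∀ v ∈ W, fM.mulVec v ∈ W) →
        (∀ v ∈ W, kM.mulVec v ∈ W) → W = ⊥ ∨ W = ⊤) ↔
      (d < l' ∨ (d = l' ∧ ¬ ∃ j : ℕ, 0 < j ∧ j < l' ∧ (-q) * lam ^ 2 = (-q) ^ j))) := by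
  subst hl' hsigma
  have hq0 : q ≠ 0 := hprim.ne_zero (by omega)
  have hsq0 : sq ≠ 0 := by rintro rfl; exact hq0 (by simpa using hsq.symm)
  have hη0 : η ≠ 0 :=
    hη ▸ sq_add_inv_mul_sub_inv_ne_zero hsq hq0 (hprim.pow_ne_one_of_pos_of_lt two_ne_zero hl)
  have hfin : IsOfFinOrder (-q) := by
    simpa using (isOfFinOrder_iff_pow_eq_one.2 ⟨2, two_pos, neg_one_sq⟩ : IsOfFinOrder (-1 : ℂ)).mul
      (hprim.isOfFinOrder (by omega))
  have hirr : (∀ W : Submodule ℂ (Fin d → ℂ),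
        (∀ v ∈ W, eM *ᵥ v ∈ W) → (∀ v ∈ W, fM *ᵥ v ∈ W) →
        (∀ v ∈ W, kM *ᵥ v ∈ W) → W = ⊥ ∨ W = ⊤) ↔
      ∀ n, 0 < n → n < d → (-q) ^ n ≠ 1 ∧ (-q) * lam ^ 2 ≠ (-q) ^ n := by
    rw [he, hf, hk, smul_Pnil'_mul_eq_mul_diagonal, smul_Qmat_eq_diagonal,
      weightedShift_irreducible_iff]
    simp only [ne_eq, eCoeff_eq_zero_iff hsq hsq0 hlam hη0, not_or]
  have hcases := pow_eq_one_or_mul_sq_eq_pow hquant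
  refine ⟨hirr.trans ((forall_ne_pow_iff_forall_mul_pow_ne (neg_ne_zero.2 hq0) hcases).trans ?_),
    hirr.trans (forall_pow_ne_one_and_ne_pow_iff hfin hcases)⟩
  simp only [Finset.prod_ne_zero_iff, Finset.mem_Icc, ne_eq,
    productFactor_eq_zero_iff hsq hsq0 hlam, not_or]
  exact forall_congr' fun n =>
    ⟨fun h hn => h (by omega) (by omega), fun h h0 hd => h ⟨h0, by omega⟩⟩

/-- The nilpotent module `M_d(λ)` of `U_q(osp(1|2))` (`q` a primitive `l`-th
root of unity, `l > 2`, `q' = -q` of order `l'`) is irreducible — i.e. the only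
subspaces invariant under `e`, `f`, `k` are `⊥` and `⊤` — if and only if
`∏_{n=1}^{d-1} (q'ⁿ - 1)(q^{1/2-d}λ + q^{d-1/2}λ⁻¹ q'⁻ⁿ) ≠ 0`; equivalently,
iff either `d < l'`, or `d = l'` and `q'λ²` is not a nontrivial power of `q'`. -/
theorem nilpotent_module_irreducible_iff
    (q sq : ℂ) (l : ℕ) (hl : 2 < l) (hprim : IsPrimitiveRoot q l) (hsq : sq ^ 2 = q)
    (l' : ℕ) (hl' : l' = orderOf (-q))
    (d : ℕ) (hd : 1 ≤ d)
    (lam sigma : ℂ) (hlam : lam ≠ 0)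
    (hsigma : sigma = sq * lam - sq⁻¹ * lam⁻¹)
    (hquant : ((-q) ^ d - 1) * (lam ^ 2 - (-q) ^ (d - 1)) = 0)
    (η : ℂ) (hη : η = (sq + sq⁻¹) * (q - q⁻¹))
    (kM fM eM : Matrix (Fin d) (Fin d) ℂ)
    (hk : kM = lam • Qmat q d)
    (hf : fM = Pnil d)
    (he : eM = η⁻¹ •
      (Pnil' d * ((sq * lam) • Qmat q d - (sq⁻¹ * lam⁻¹) • QmatInv q d
        - sigma • Umat d))) :
    ((∀ W : Submodule ℂ (Fin d → ℂ),
        (∀ v ∈ W, eM.mulVec v ∈ W) → (∀ v ∈ W, fM.mulVec v ∈ W) →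
        (∀ v ∈ W, kM.mulVec v ∈ W) → W = ⊥ ∨ W = ⊤) ↔
      (∏ n ∈ Finset.Icc 1 (d - 1),
          (((-q) ^ n - 1) *
            (sq * (q ^ d)⁻¹ * lam + q ^ d * sq⁻¹ * lam⁻¹ * ((-q) ^ n)⁻¹)) ≠ 0)) ∧
    ((∀ W : Submodule ℂ (Fin d → ℂ),
        (∀ v ∈ W, eM.mulVec v ∈ W) → (∀ v ∈ W, fM.mulVec v ∈ W) →
        (∀ v ∈ W, kM.mulVec v ∈ W) → W = ⊥ ∨ W = ⊤) ↔
      (d < l' ∨ (d = l' ∧ ¬ ∃ j : ℕ, 0 < j ∧ j < l' ∧ (-q) * lam ^ 2 = (-q) ^ j))) :=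
  nilpotent_module_irreducible_iff_general q sq l hl hprim hsq l' hl' d lam sigma hlam hsigma hquant
    η hη kM fM eM hk hf he
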